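/- arXiv:2303.02253 — 3 statements merged into one kernel-verified Lean document; each statement's English description precedes it below -/
import Mathlib

section
/- There is at most one way to assign to every loopless matroid M a polynomial P_M(t) with integer coefficients such that: (i) if rk(M)=0 then P_M(t)=1; (ii) if rk(M)>0 then deg P_M(t) < rk(M)/2; (iii) the polynomial Z_M(t) = Σ_{F ∈ L(M)} t^{rk(F)} P_{M/F}(t) is palindromic of degree rk(M). In other words, such an assignment (P_M, Z_M) is uniquely determined by these three properties. -/
open Matroid Set Polynomial

variable {α β : Type*}

/-- Rank of a set in a matroid: size of the largest independent subset. -/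
noncomputable def Matroid.rkSet (M : Matroid α) (X : Set α) : ℕ :=
  sSup {n | ∃ I, M.Indep I ∧ I ⊆ X ∧ I.ncard = n}

/-- Rank of a matroid. -/
noncomputable def Matroid.rank (M : Matroid α) : ℕ := M.rkSet M.E

/-- Deletion of a set. -/
def Matroid.del (M : Matroid α) (D : Set α) : Matroid α := M ↾ (M.E \ D)

/-- Contraction of a set, defined by duality. -/
def Matroid.ctr (M : Matroid α) (C : Set α) : Matroid α := ((M✶).del C)✶

/-- A circuit: a minimal dependent set. -/
def Matroid.IsCct (M : Matroid α) (C : Set α) : Prop :=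
  C ⊆ M.E ∧ ¬ M.Indep C ∧ ∀ x ∈ C, M.Indep (C \ {x})

/-- A cocircuit: a circuit of the dual. -/
def Matroid.IsCocct (M : Matroid α) (C : Set α) : Prop := (M✶).IsCct C

/-- A loopless matroid. -/
def Matroid.Loopless' (M : Matroid α) : Prop := ∀ e ∈ M.E, M.Indep {e}

/-- A simple matroid: loopless and no 2-element circuits. -/
def Matroid.Simple' (M : Matroid α) : Prop :=
  M.Loopless' ∧ ∀ e ∈ M.E, ∀ f ∈ M.E, e ≠ f → M.Indep {e, f}

/-- `M'` is a parallel extension of `M`. -/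
def Matroid.IsParallelExt (M M' : Matroid α) : Prop :=
  ∃ e C, e ∈ M'.E ∧ M'.IsCct C ∧ C.ncard = 2 ∧ e ∈ C ∧ M'.del {e} = M

/-- `M'` is a series extension of `M`. -/
def Matroid.IsSeriesExt (M M' : Matroid α) : Prop :=
  ∃ e C, e ∈ M'.E ∧ M'.IsCocct C ∧ C.ncard = 2 ∧ e ∈ C ∧ M'.ctr {e} = M

/-- Series-parallel matroids: generated from a single loop or coloop by
series and parallel extensions. -/
inductive Matroid.IsSeriesParallel : Matroid α → Prop
  | loop (e : α) : Matroid.IsSeriesParallel (Matroid.loopyOn {e})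
  | coloop (e : α) : Matroid.IsSeriesParallel (Matroid.freeOn {e})
  | parallel {M M' : Matroid α} : Matroid.IsSeriesParallel M →
      M.IsParallelExt M' → Matroid.IsSeriesParallel M'
  | series {M M' : Matroid α} : Matroid.IsSeriesParallel M →
      M.IsSeriesExt M' → Matroid.IsSeriesParallel M'

/-- `N` is a minor of `M`. -/
def Matroid.IsMinorOf (N M : Matroid α) : Prop :=
  ∃ C D, C ⊆ M.E ∧ D ⊆ M.E ∧ N = (M.ctr C).del D

/-- Isomorphism of matroids on possibly different types. -/
def Matroid.IsIsoTo (M : Matroid α) (N : Matroid β) : Prop :=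
  ∃ f : α → β, Set.BijOn f M.E N.E ∧ ∀ I ⊆ M.E, (M.Indep I ↔ N.Indep (f '' I))

/-- `N` is (isomorphic to) the uniform matroid `U_{2,4}`. -/
def Matroid.IsU24 (N : Matroid β) : Prop :=
  N.E.ncard = 4 ∧ ∀ I ⊆ N.E, (N.Indep I ↔ I.ncard ≤ 2)

/-- `N` is (isomorphic to) the cycle matroid of the complete graph `K₄`. -/
def Matroid.IsMK4 (N : Matroid β) : Prop :=
  ∃ f : β → Sym2 (Fin 4), Set.BijOn f N.E {e : Sym2 (Fin 4) | ¬ e.IsDiag} ∧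
    ∀ I ⊆ N.E, (N.Indep I ↔ (SimpleGraph.fromEdgeSet (f '' I)).IsAcyclic)

/-- A quasi series-parallel matroid: no `U_{2,4}`- or `M(K₄)`-minor. -/
def Matroid.IsQuasiSP (M : Matroid α) : Prop :=
  ¬ ∃ N : Matroid α, N.IsMinorOf M ∧ (N.IsU24 ∨ N.IsMK4)

/-- One step of the connectivity relation: lying on a common circuit. -/
def Matroid.ConnStep (M : Matroid α) (e f : α) : Prop :=
  ∃ C, M.IsCct C ∧ e ∈ C ∧ f ∈ C

/-- The connected component of `e` in `M`. -/
def Matroid.comp (M : Matroid α) (e : α) : Set α :=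
  {f ∈ M.E | Relation.ReflTransGen M.ConnStep e f}

/-- A connected matroid. -/
def Matroid.IsConnected' (M : Matroid α) : Prop :=
  M.E.Nonempty ∧ ∀ e ∈ M.E, ∀ f ∈ M.E, Relation.ReflTransGen M.ConnStep e f

/-- A polynomial is palindromic of degree `d`. -/
def IsPalindromic (d : ℕ) {R : Type*} [Semiring R] (p : Polynomial R) : Prop :=
  p.natDegree = d ∧ ∀ i ≤ d, p.coeff i = p.coeff (d - i)

/-- The defining axioms of the (non-equivariant) Kazhdan–Lusztig polynomial of
matroids, for an assignment `P` of a polynomial to every matroid on `α`. -/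
def IsKLAssignment (P : Matroid α → Polynomial ℤ) : Prop :=
  (∀ M : Matroid α, M.Finite → M.Loopless' → M.rank = 0 → P M = 1) ∧
  (∀ M : Matroid α, M.Finite → M.Loopless' → 0 < M.rank →
      2 * (P M).natDegree < M.rank) ∧
  (∀ M : Matroid α, M.Finite → M.Loopless' →
      IsPalindromic M.rank (∑ᶠ F ∈ {F | M.IsFlat F}, X ^ (M.rkSet F) * P (M.ctr F)))

/-- The `Z`-polynomial associated to an assignment `P`. -/
noncomputable def ZPoly (P : Matroid α → Polynomial ℤ) (M : Matroid α) : Polynomial ℤ :=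
  ∑ᶠ F ∈ {F | M.IsFlat F}, X ^ (M.rkSet F) * P (M.ctr F)

/-- The braid matroid on `n` vertices: the cycle matroid of the complete graph `Kₙ`,
with ground set the set of non-diagonal elements of `Sym2 (Fin n)`. -/
def IsBraid (n : ℕ) (B : Matroid (Sym2 (Fin n))) : Prop :=
  B.E = {e : Sym2 (Fin n) | ¬ e.IsDiag} ∧
  ∀ I ⊆ B.E, (B.Indep I ↔ (SimpleGraph.fromEdgeSet I).IsAcyclic)

/-- Stirling numbers of the second kind. -/
def stirling2 : ℕ → ℕ → ℕ
  | 0, 0 => 1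
  | 0, _ + 1 => 0
  | _ + 1, 0 => 0
  | n + 1, k + 1 => (k + 1) * stirling2 n (k + 1) + stirling2 n k

/-- A triangular cactus: a connected graph in which every edge lies in a (unique)
cycle, and every cycle is a triangle. -/
def IsTriangularCactus {V : Type*} (G : SimpleGraph V) : Prop :=
  G.Connected ∧
  (∀ e ∈ G.edgeSet, ∃ (v : V) (w : G.Walk v v), w.IsCycle ∧ w.length = 3 ∧ e ∈ w.edges) ∧
  (∀ (v : V) (w : G.Walk v v), w.IsCycle → w.length = 3)

/-!
Strong induction on the size of the ground set. For a nonempty flat `F`, the contraction `M / F`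
is loopless with a strictly smaller ground set, so by induction `P₁` and `P₂` agree on it. Hence
`Z₁ - Z₂ = P₁ M - P₂ M`, the summand of the flat `∅`. Its coefficients are symmetric about
`rk M / 2` (as those of `Z₁, Z₂` are), yet it has degree `< rk M / 2`, so it vanishes.
-/

namespace Polynomial

theorem eq_zero_of_coeff_symm_of_two_mul_natDegree_lt {R : Type*} [Semiring R] {p : R[X]}
    {d : ℕ} (hsymm : ∀ i ≤ d, p.coeff i = p.coeff (d - i)) (hdeg : 2 * p.natDegree < d) :
    p = 0 := by
  ext i
  rw [coeff_zero]
  rcases le_or_gt d (2 * i) with hi | hi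
  · exact coeff_eq_zero_of_natDegree_lt (by omega)
  · rw [hsymm i (by omega)]
    exact coeff_eq_zero_of_natDegree_lt (by omega)

end Polynomial

theorem IsPalindromic.coeff_sub_symm {R : Type*} [Ring R] {d : ℕ} {p q : R[X]}
    (hp : IsPalindromic d p) (hq : IsPalindromic d q) :
    ∀ i ≤ d, (p - q).coeff i = (p - q).coeff (d - i) := by
  intro i hi
  rw [coeff_sub, coeff_sub, hp.2 i hi, hq.2 i hi]

namespace Matroid

variable {M : Matroid α} {F : Set α}

theorem ctr_eq_contract (M : Matroid α) (C : Set α) : M.ctr C = M ／ C := rfl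

theorem loopless'_iff_loopless : M.Loopless' ↔ M.Loopless := by
  simp only [Loopless', loopless_iff_forall_isNonloop, indep_singleton]

theorem rkSet_empty (M : Matroid α) : M.rkSet ∅ = 0 := by
  simp [rkSet]

theorem IsFlat.loopless'_ctr (hF : M.IsFlat F) : (M.ctr F).Loopless' := by
  rw [loopless'_iff_loopless, loopless_iff_forall_isNonloop, ctr_eq_contract]
  intro e he
  rwa [contract_isNonloop_iff, hF.closure]

theorem IsFlat.ncard_ground_ctr_lt (hM : M.Finite) (hF : M.IsFlat F) (hne : F.Nonempty) :
    (M.ctr F).E.ncard < M.E.ncard :=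
  ncard_lt_ncard (hF.subset_ground.sdiff_ssubset_of_nonempty hne) hM.ground_finite

theorem isFlat_empty_of_loopless' (hl : M.Loopless') : M.IsFlat ∅ := by
  rw [loopless'_iff_loopless] at hl
  simpa only [closure_empty, loops_eq_empty] using M.isFlat_closure (X := ∅)

instance ctr_finite [M.Finite] (C : Set α) : (M.ctr C).Finite := by
  rw [ctr_eq_contract]
  infer_instance

theorem finite_setOf_isFlat (hM : M.Finite) : {F | M.IsFlat F}.Finite :=
  hM.ground_finite.finite_subsets.subset fun _ hF => hF.subset_ground

end Matroid

section ZPoly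

variable {P₁ P₂ : Matroid α → Polynomial ℤ} {M : Matroid α}

theorem ZPoly_congr
    (h : ∀ F, M.IsFlat F → P₁ (M.ctr F) = P₂ (M.ctr F)) : ZPoly P₁ M = ZPoly P₂ M :=
  finsum_mem_congr rfl fun F hF => by rw [h F hF]

theorem ZPoly_sub_ZPoly (hM : M.Finite) (hl : M.Loopless')
    (h : ∀ F, M.IsFlat F → F.Nonempty → P₁ (M.ctr F) = P₂ (M.ctr F)) :
    ZPoly P₁ M - ZPoly P₂ M = P₁ M - P₂ M := by
  have hflats := Matroid.finite_setOf_isFlat hM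
  rw [ZPoly, ZPoly, finsum_mem_eq_finite_toFinset_sum _ hflats,
    finsum_mem_eq_finite_toFinset_sum _ hflats, ← Finset.sum_sub_distrib,
    Finset.sum_eq_single_of_mem ∅ (by simpa using Matroid.isFlat_empty_of_loopless' hl)]
  · rw [Matroid.rkSet_empty, Matroid.ctr_eq_contract, contract_empty, pow_zero, one_mul, one_mul]
  · intro F hF hne
    rw [h F (by simpa using hF) (nonempty_iff_ne_empty.mpr hne), sub_self]

theorem IsKLAssignment.apply_eq (h₁ : IsKLAssignment P₁) (h₂ : IsKLAssignment P₂)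
    (hM : M.Finite) (hl : M.Loopless') : P₁ M = P₂ M := by
  induction hn : M.E.ncard using Nat.strong_induction_on generalizing M with
  | _ n ih =>
    rcases Nat.eq_zero_or_pos M.rank with h0 | hpos
    · rw [h₁.1 M hM hl h0, h₂.1 M hM hl h0]
    have hctr (F) (hF : M.IsFlat F) (hne : F.Nonempty) : P₁ (M.ctr F) = P₂ (M.ctr F) :=
      ih _ (hn ▸ hF.ncard_ground_ctr_lt hM hne) inferInstance hF.loopless'_ctr rfl
    have hsymm := (h₁.2.2 M hM hl).coeff_sub_symm (h₂.2.2 M hM hl)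
    rw [← ZPoly, ← ZPoly, ZPoly_sub_ZPoly hM hl hctr] at hsymm
    have hdeg : 2 * (P₁ M - P₂ M).natDegree < M.rank := by
      have := natDegree_sub_le (P₁ M) (P₂ M)
      have := h₁.2.1 M hM hl hpos
      have := h₂.2.1 M hM hl hpos
      omega
    exact sub_eq_zero.mp (eq_zero_of_coeff_symm_of_two_mul_natDegree_lt hsymm hdeg)

end ZPoly

/-- Uniqueness of the Kazhdan–Lusztig polynomial assignment: any two assignments
`P₁, P₂` satisfying axioms (i)–(iii) agree on every finite loopless matroid, and
hence so do the associated `Z`-polynomials. -/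
theorem kl_assignment_unique {α : Type*} (P₁ P₂ : Matroid α → Polynomial ℤ)
    (h₁ : IsKLAssignment P₁) (h₂ : IsKLAssignment P₂) :
    ∀ M : Matroid α, M.Finite → M.Loopless' → P₁ M = P₂ M ∧ ZPoly P₁ M = ZPoly P₂ M := by
  intro M hM hl
  refine ⟨h₁.apply_eq h₂ hM hl, ZPoly_congr fun F hF => ?_⟩
  exact h₁.apply_eq h₂ inferInstance hF.loopless'_ctr
end

section
/- Every simple connected series-parallel matroid on a nonempty ground set of size n has rank at least ⌈(n+1)/2⌉; equivalently, in any construction of a simple series-parallel matroid from U_{1,1} by series and parallel extensions, the number of series extensions is at least the number of parallel extensions. -/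
open Matroid Set Polynomial

variable {α β : Type*}

/-! A set `S` of pairwise independent elements of a series-parallel matroid `M` satisfies
`|S| < max 2 (2 r(M))`, by induction on the construction. Deleting an element `e` parallel to
`g` keeps the rank, and such a set through `e` can trade `e` for `g`. Contracting an element `e`
in series with `g` lowers the rank by one, and `S \ {e, g}` stays pairwise independent in
`M ／ {e}`: a circuit through `e` inside `S ∪ {e}` would meet the cocircuit `{e, g}` in `e`
alone. -/

lemma Set.exists_eq_pair_of_ncard_eq_two_of_mem {s : Set α} {e : α} (h : s.ncard = 2)
    (he : e ∈ s) : ∃ g, e ≠ g ∧ s = {e, g} := by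
  obtain ⟨a, b, hab, rfl⟩ := Set.ncard_eq_two.mp h
  obtain rfl | rfl := he
  · exact ⟨b, hab, rfl⟩
  · exact ⟨a, hab.symm, Set.pair_comm a e⟩

namespace Matroid

variable {M : Matroid α} {B C I S : Set α} {e g : α}

lemma isCct_iff_isCircuit : M.IsCct C ↔ M.IsCircuit C := by
  rw [isCircuit_iff_dep_forall_sdiff_singleton_indep, IsCct, Dep]
  tauto

lemma IsParallelExt.exists_isCircuit_pair {N : Matroid α} (h : N.IsParallelExt M) :
    ∃ e g, e ≠ g ∧ M.IsCircuit {e, g} ∧ N = M ＼ {e} := by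
  obtain ⟨e, C, -, hC, hC2, heC, rfl⟩ := h
  obtain ⟨g, hne, rfl⟩ := Set.exists_eq_pair_of_ncard_eq_two_of_mem hC2 heC
  exact ⟨e, g, hne, isCct_iff_isCircuit.mp hC, rfl⟩

lemma IsSeriesExt.exists_isCocircuit_pair {N : Matroid α} (h : N.IsSeriesExt M) :
    ∃ e g, e ≠ g ∧ M.IsCocircuit {e, g} ∧ N = M ／ {e} := by
  obtain ⟨e, C, -, hC, hC2, heC, rfl⟩ := h
  obtain ⟨g, hne, rfl⟩ := Set.exists_eq_pair_of_ncard_eq_two_of_mem hC2 heC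
  exact ⟨e, g, hne, isCct_iff_isCircuit.mp hC, rfl⟩

lemma IsSeriesParallel.finite (h : M.IsSeriesParallel) : M.Finite := by
  induction h with
  | loop e => exact ⟨Set.finite_singleton e⟩
  | coloop e => exact ⟨Set.finite_singleton e⟩
  | parallel _ hext ih =>
    obtain ⟨e, -, -, -, rfl⟩ := hext.exists_isCircuit_pair
    exact ⟨ih.ground_finite.of_sdiff (Set.finite_singleton e)⟩
  | series _ hext ih =>
    obtain ⟨e, -, -, -, rfl⟩ := hext.exists_isCocircuit_pair
    exact ⟨ih.ground_finite.of_sdiff (Set.finite_singleton e)⟩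

section rank

variable [M.RankFinite]

lemma IsBase.rank_eq_ncard (hB : M.IsBase B) : M.rank = B.ncard := by
  have hle : ∀ n ∈ {n | ∃ I, M.Indep I ∧ I ⊆ M.E ∧ I.ncard = n}, n ≤ B.ncard := by
    rintro _ ⟨I, hI, -, rfl⟩
    obtain ⟨B', hB', hIB'⟩ := hI.exists_isBase_superset
    exact (Set.ncard_le_ncard hIB' hB'.finite).trans (hB'.ncard_eq_ncard_of_isBase hB).le
  exact le_antisymm (csSup_le ⟨0, ∅, M.empty_indep, Set.empty_subset _, by simp⟩ hle)
    (le_csSup ⟨_, hle⟩ ⟨B, hB.indep, hB.subset_ground, rfl⟩)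

lemma Indep.ncard_le_rank (hI : M.Indep I) : I.ncard ≤ M.rank := by
  obtain ⟨B, hB, hIB⟩ := hI.exists_isBase_superset
  exact hB.rank_eq_ncard ▸ Set.ncard_le_ncard hIB hB.finite

lemma rank_delete_of_spanning {D : Set α} (hD : M.Spanning (M.E \ D)) :
    (M ＼ D).rank = M.rank := by
  obtain ⟨B, hB, hBD⟩ := hD.exists_isBase_subset
  have hB' : (M ＼ D).IsBase B := by
    rw [delete_eq_restrict, hD.isBase_restrict_iff]
    exact ⟨hB, hBD⟩
  rw [hB.rank_eq_ncard, hB'.rank_eq_ncard]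

lemma IsCircuit.rank_deleteElem (hC : M.IsCircuit C) (heC : e ∈ C) :
    (M ＼ {e}).rank = M.rank :=
  rank_delete_of_spanning <| not_not.mp <|
    mt isColoop_iff_sdiff_not_spanning.mpr (hC.not_isColoop_of_mem heC)

lemma IsNonloop.rank_contractElem_add_one (he : M.IsNonloop e) :
    (M ／ {e}).rank + 1 = M.rank := by
  obtain ⟨B, hB, heB⟩ := he.exists_mem_isBase
  have hB' : (M ／ {e}).IsBase (B \ {e}) := by
    rw [he.indep.contract_isBase_iff, Set.sdiff_union_self, Set.union_singleton,
      Set.insert_eq_of_mem heB]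
    exact ⟨hB, Set.disjoint_sdiff_left⟩
  rw [hB.rank_eq_ncard, hB'.rank_eq_ncard, Set.ncard_sdiff_singleton_add_one heB hB.finite]

end rank

lemma Indep.insert_of_isCircuit_pair (hC : M.IsCircuit {e, g}) (hI : M.Indep (insert e I))
    (heI : e ∉ I) : M.Indep (insert g I) := by
  have hI' : M.Indep I := hI.subset (Set.subset_insert e I)
  have hne : e ≠ g := by
    rintro rfl
    exact hC.not_indep (hI.subset (by simp))
  have hgI : g ∉ I := fun hgI ↦
    hC.not_indep (hI.subset (Set.pair_subset (Set.mem_insert e I) (Set.mem_insert_of_mem e hgI)))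
  rw [hI'.insert_indep_iff_of_notMem hgI]
  refine ⟨hC.subset_ground (by simp), fun hg ↦ ?_⟩
  have he : e ∈ M.closure {g} := by
    simpa [Set.pair_sdiff_left hne] using hC.mem_closure_sdiff_singleton_of_mem (Set.mem_insert e _)
  exact ((hI'.insert_indep_iff_of_notMem heI).mp hI).2
    (M.closure_subset_closure_of_subset_closure (Set.singleton_subset_iff.mpr hg) he)

lemma Indep.insert_of_isCocircuit_pair (hK : M.IsCocircuit {e, g}) (hI : M.Indep I)
    (hgI : g ∉ I) : M.Indep (insert e I) := by
  by_contra hdep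
  obtain ⟨C, hCI, hC⟩ := (M.dep_of_not_indep hdep
    (Set.insert_subset (hK.subset_ground (by simp)) hI.subset_ground)).exists_isCircuit_subset
  have heC : e ∈ C := by
    by_contra heC
    exact hC.not_indep (hI.subset ((Set.subset_insert_iff_of_notMem heC).mp hCI))
  refine hC.inter_isCocircuit_ne_singleton hK (e := e) (Set.ext fun x ↦ ⟨?_, ?_⟩)
  · rintro ⟨hxC, rfl | rfl⟩
    · rfl
    · exact ((Set.mem_insert_iff.mp (hCI hxC)).resolve_right hgI)
  · rintro rfl
    exact ⟨heC, by simp⟩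

/-- `M ↾ S` is simple; the case `a = b` says that the elements of `S` are nonloops. -/
def PairwiseIndep (M : Matroid α) (S : Set α) : Prop := ∀ a ∈ S, ∀ b ∈ S, M.Indep {a, b}

lemma Simple'.pairwiseIndep_ground (h : M.Simple') : M.PairwiseIndep M.E := by
  intro a ha b hb
  obtain rfl | hab := eq_or_ne a b
  · simpa using h.1 a ha
  · exact h.2 a ha b hb hab

lemma PairwiseIndep.delete {D : Set α} (h : M.PairwiseIndep S) (hSD : Disjoint S D) :
    (M ＼ D).PairwiseIndep S := fun a ha b hb ↦
  delete_indep_iff.mpr ⟨h a ha b hb, hSD.mono_left (Set.pair_subset ha hb)⟩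

lemma PairwiseIndep.exchange (h : M.PairwiseIndep S) (hC : M.IsCircuit {e, g}) (heS : e ∈ S) :
    M.PairwiseIndep (insert g (S \ {e})) := by
  have hg : M.Indep {g} := by
    simpa using (show M.Indep (insert e ∅) by simpa using h e heS e heS).insert_of_isCircuit_pair
      hC (Set.notMem_empty e)
  have hgb : ∀ b ∈ S \ {e}, M.Indep {g, b} := fun b hb ↦
    (h e heS b hb.1).insert_of_isCircuit_pair hC (by simpa using Ne.symm hb.2)
  rintro a (rfl | ha) b (rfl | hb)
  · simpa using hg
  · exact hgb b hb
  · exact Set.pair_comm a b ▸ hgb a ha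
  · exact h a ha.1 b hb.1

lemma PairwiseIndep.contractElem (h : M.PairwiseIndep S) (hK : M.IsCocircuit {e, g}) :
    (M ／ {e}).PairwiseIndep (S \ {e, g}) := by
  intro a ha b hb
  rw [(hK.isNonloop_of_mem (Set.mem_insert e _)).contractElem_indep_iff]
  refine ⟨?_, (h a ha.1 b hb.1).insert_of_isCocircuit_pair hK ?_⟩ <;> grind

lemma PairwiseIndep.two_le_rank [M.RankFinite] (h : M.PairwiseIndep S) (hS : 1 < S.ncard) :
    2 ≤ M.rank := by
  obtain ⟨a, ha, b, hb, hab⟩ := (Set.one_lt_ncard_iff_nontrivial_and_finite.mp hS).1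
  exact Set.ncard_pair hab ▸ (h a ha b hb).ncard_le_rank

theorem IsSeriesParallel.ncard_lt_of_pairwiseIndep (hM : M.IsSeriesParallel)
    (hS : M.PairwiseIndep S) : S.ncard < max 2 (2 * M.rank) := by
  induction hM generalizing S with
  | loop e =>
    obtain rfl : S = ∅ := Set.eq_empty_of_forall_notMem fun a ha ↦ by simpa using hS a ha a ha
    simp
  | coloop e =>
    have hSe : S ⊆ {e} := fun a ha ↦ (hS a ha a ha).subset_ground (by simp)
    have := Set.ncard_le_ncard hSe
    simp only [Set.ncard_singleton] at this
    omega
  | @parallel N M hN hext ih =>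
    have := (hN.parallel hext).finite
    obtain ⟨e, g, hne, hC, rfl⟩ := hext.exists_isCircuit_pair
    rw [← hC.rank_deleteElem (Set.mem_insert e _)]
    by_cases heS : e ∈ S
    · have hgS : g ∉ S := fun hgS ↦ hC.not_indep (hS e heS g hgS)
      rw [← Set.ncard_exchange hgS heS]
      exact ih ((hS.exchange hC heS).delete (by simp [hne]))
    · exact ih (hS.delete (Set.disjoint_singleton_right.mpr heS))
  | @series N M hN hext ih =>
    have := (hN.series hext).finite
    obtain ⟨e, g, hne, hK, rfl⟩ := hext.exists_isCocircuit_pair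
    have hrank := (hK.isNonloop_of_mem (Set.mem_insert e _)).rank_contractElem_add_one
    have hcard := Set.ncard_le_ncard_sdiff_add_ncard S {e, g}
    rw [Set.ncard_pair hne] at hcard
    obtain hS1 | hS1 := le_or_gt S.ncard 1
    · omega
    · have := hS.two_le_rank hS1
      have := ih (hS.contractElem hK)
      omega

end Matroid

theorem simple_seriesParallel_rank_bound_general {α : Type*} (M : Matroid α)
    (hs : M.Simple') (hsp : M.IsSeriesParallel) (hne : M.E.Nonempty) :
    (M.E.ncard + 2) / 2 ≤ M.rank := by
  have := hsp.finite
  obtain ⟨x, hx⟩ := hne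
  have hrank : 1 ≤ M.rank := by simpa using (hs.1 x hx).ncard_le_rank
  have hbound := hsp.ncard_lt_of_pairwiseIndep hs.pairwiseIndep_ground
  omega

/-- A simple connected series-parallel matroid on a nonempty ground set of size `n`
has rank at least `⌈(n+1)/2⌉`. -/
theorem simple_seriesParallel_rank_bound {α : Type*} (M : Matroid α)
    (hfin : M.Finite) (hs : M.Simple') (hconn : M.IsConnected')
    (hsp : M.IsSeriesParallel) (hne : M.E.Nonempty) :
    (M.E.ncard + 2) / 2 ≤ M.rank :=
  simple_seriesParallel_rank_bound_general M hs hsp hne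
end

section
/- Every triangular cactus with at least three vertices contains a triangle at least two of whose vertices have degree 2 in the cactus. -/
open Matroid Set Polynomial

variable {α β : Type*}

/-! Take a longest path `u a b …`. Every neighbour of `u` lies on it by maximality, and, since all
cycles are triangles, it is `a` or `b`. The triangle through the edge `ua` then forces `u ~ b`, so
`a u b …` is another longest path and the same argument shows that `a` has only the neighbours
`u` and `b`. Hence `uab` is a triangle with `u` and `a` of degree `2`. -/

namespace SimpleGraph

variable {V : Type*} {G : SimpleGraph V}

namespace Walk

def IsLongestPath {u v : V} (p : G.Walk u v) : Prop :=
  p.IsPath ∧ ∀ (x y : V) (q : G.Walk x y), q.IsPath → q.length ≤ p.length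

lemma exists_isLongestPath [Finite V] [Nonempty V] (G : SimpleGraph V) :
    ∃ (u v : V) (p : G.Walk u v), p.IsLongestPath := by
  have := Fintype.ofFinite V
  let S : Set ℕ := {n | ∃ (u v : V) (p : G.Walk u v), p.IsPath ∧ p.length = n}
  have hbdd : BddAbove S :=
    ⟨Fintype.card V, by rintro _ ⟨_, _, p, hp, rfl⟩; exact hp.length_lt.le⟩
  obtain ⟨u, v, p, hp, hlen⟩ : sSup S ∈ S :=
    Nat.sSup_mem ⟨0, Classical.arbitrary V, _, nil, IsPath.nil, rfl⟩ hbdd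
  exact ⟨u, v, p, hp, fun x y q hq => hlen ▸ le_csSup hbdd ⟨x, y, q, hq, rfl⟩⟩

lemma exists_adj_adj_of_length_eq_three {u x y : V} {c : G.Walk u u} (hc : c.length = 3)
    (he : s(x, y) ∈ c.edges) : ∃ z, G.Adj x z ∧ G.Adj y z := by
  match c with
  | .cons h₁ (.cons h₂ (.cons h₃ .nil)) =>
    simp only [edges_cons, edges_nil, List.mem_cons, List.not_mem_nil, or_false,
      Sym2.eq_iff] at he
    grind [Adj.symm]

lemma IsPath.length_eq_two_of_adj (hcyc : ∀ (v : V) (c : G.Walk v v), c.IsCycle → c.length = 3)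
    {u w : V} {q : G.Walk u w} (hq : q.IsPath) (hwu : G.Adj w u) (h2 : 2 ≤ q.length) :
    q.length = 2 := by
  have hcycle : (cons hwu q).IsCycle :=
    isCycle_iff_isPath_tail_and_le_length.mpr ⟨by simpa using hq, by simp; omega⟩
  simpa using hcyc _ _ hcycle

lemma IsLongestPath.swap_start {u a b v : V} {hua : G.Adj u a} {hab : G.Adj a b}
    {q : G.Walk b v} (hp : (cons hua (cons hab q)).IsLongestPath) (hub : G.Adj u b) :
    (cons hua.symm (cons hub q)).IsLongestPath := by
  refine ⟨?_, by simpa using hp.2⟩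
  have := hp.1
  simp only [isPath_def, support_cons, List.nodup_cons, List.mem_cons, not_or] at this ⊢
  exact ⟨⟨hua.ne', this.2.1⟩, this.1.2, this.2.2⟩

section

variable (hcyc : ∀ (v : V) (c : G.Walk v v), c.IsCycle → c.length = 3)
include hcyc

lemma IsLongestPath.eq_getVert_one_or_two_of_adj {u v w : V} {p : G.Walk u v}
    (hp : p.IsLongestPath) (huw : G.Adj u w) : w = p.getVert 1 ∨ w = p.getVert 2 := by
  classical
  have hw : w ∈ p.support := by
    by_contra hw
    simpa using hp.2 _ _ _ (hp.1.cons hw (h := huw.symm))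
  have hk := p.getVert_length_takeUntil hw
  have hq := hp.1.takeUntil hw
  have hk0 : (p.takeUntil w hw).length ≠ 0 := fun h => huw.ne (by simpa [h] using hk)
  have hk12 : (p.takeUntil w hw).length = 1 ∨ (p.takeUntil w hw).length = 2 := by
    rcases Nat.lt_or_ge (p.takeUntil w hw).length 2 with hk1 | hk2
    · omega
    · exact .inr (hq.length_eq_two_of_adj hcyc huw.symm hk2)
  rcases hk12 with h | h
  · exact .inl (by rw [← hk, h])
  · exact .inr (by rw [← hk, h])

lemma IsLongestPath.neighborSet_start_eq
    (htri : ∀ e ∈ G.edgeSet,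
      ∃ (v : V) (c : G.Walk v v), c.IsCycle ∧ c.length = 3 ∧ e ∈ c.edges)
    {u v : V} {p : G.Walk u v} (hp : p.IsLongestPath) (h2 : 2 ≤ p.length) :
    G.neighborSet u = {p.getVert 1, p.getVert 2} := by
  have hadj₁ : G.Adj u (p.getVert 1) := by simpa using p.adj_getVert_succ (i := 0) (by omega)
  have hadj₂ : G.Adj u (p.getVert 2) := by
    obtain ⟨_, c, -, hc, he⟩ := htri s(u, _) hadj₁
    obtain ⟨t, hut, ht⟩ := exists_adj_adj_of_length_eq_three hc he
    rcases hp.eq_getVert_one_or_two_of_adj hcyc hut with rfl | rfl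
    · exact absurd ht G.irrefl
    · exact hut
  ext w
  simp only [mem_neighborSet, Set.mem_insert_iff, Set.mem_singleton_iff]
  exact ⟨hp.eq_getVert_one_or_two_of_adj hcyc, by rintro (rfl | rfl) <;> assumption⟩

end

end Walk

end SimpleGraph

open SimpleGraph Walk

/-- Every triangular cactus with at least three vertices contains a triangle at least
two of whose vertices have degree `2`. -/
theorem triangularCactus_exists_pendant_triangle {V : Type*} [Finite V]
    (G : SimpleGraph V) (hG : IsTriangularCactus G) (hV : 3 ≤ Nat.card V) :
    ∃ a b c : V, G.Adj a b ∧ G.Adj b c ∧ G.Adj a c ∧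
      (G.neighborSet b).ncard = 2 ∧ (G.neighborSet c).ncard = 2 := by
  obtain ⟨hconn, htri, hcyc⟩ := hG
  have : Nontrivial V := Finite.one_lt_card_iff_nontrivial.mp (by omega)
  obtain ⟨x, y, hxy⟩ : ∃ x y, G.Adj x y :=
    ⟨_, hconn.preconnected.exists_adj_of_nontrivial (Classical.arbitrary V)⟩
  obtain ⟨_, c, -, hc, he⟩ := htri s(x, y) hxy
  obtain ⟨z, hxz, hyz⟩ := exists_adj_adj_of_length_eq_three hc he
  obtain ⟨u, v, p, hp⟩ := exists_isLongestPath G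
  have h2 : 2 ≤ p.length := hp.2 _ _ (cons hxy (cons hyz nil))
    (by simp [cons_isPath_iff, hxy.ne, hyz.ne, hxz.ne])
  cases p with
  | nil => simp at h2
  | @cons _ a _ hua p =>
  cases p with
  | nil => simp at h2
  | @cons _ b _ hab q =>
  have hNu := hp.neighborSet_start_eq hcyc htri h2
  simp only [getVert_cons_succ, getVert_zero] at hNu
  have hub : G.Adj u b := by simp [← mem_neighborSet, hNu]
  have hNa := (hp.swap_start hub).neighborSet_start_eq hcyc htri (by simp)
  simp only [getVert_cons_succ, getVert_zero] at hNa
  refine ⟨b, a, u, hab.symm, hua.symm, hub.symm, ?_, ?_⟩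
  · rw [hNa, Set.ncard_pair hub.ne]
  · rw [hNu, Set.ncard_pair hab.ne]
end
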